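/- Let n ≥ 2 be even and let a_1, …, a_n be integers with a_i ≥ 2, and let w = x_n x_1^{a_1} + Σ_{i=2}^{n} x_{i−1} x_i^{a_i} ∈ ℂ[x_1, …, x_n] (the dual loop polynomial). Then in the Milnor ring Q_w = ℂ[x_1, …, x_n]/(∂w/∂x_1, …, ∂w/∂x_n) one has [ ∏_{j even} x_j^{a_j − 1} ]^2 = ( ∏_{j odd} (−a_j) ) · [ ∏_{i=1}^{n} x_i^{a_i − 1} ] and [ ∏_{j odd} x_j^{a_j − 1} ]^2 = ( ∏_{j even} (−a_j) ) · [ ∏_{i=1}^{n} x_i^{a_i − 1} ]. -/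

import Mathlib

/-!
The partial derivatives of `w` give, in the Milnor ring, the relations
`x_{k+1}^{a_{k+1}} = -a_k x_{k-1} x_k^{a_k - 1}` (indices mod `n`). For one parity class `S` of
indices write `(x_j^{a_j - 1})^2 = x_j^{a_j} x_j^{a_j - 2}` and substitute. As `n` is even,
`j ↦ j - 1` maps `S` onto the other class `S'` and `j ↦ j - 2` maps `S` onto itself, so the new
factors `x_{j-2}` restore `∏_S x_j^{a_j - 1}`, the factors `x_{j-1}^{a_{j-1} - 1}` give
`∏_{S'} x_k^{a_k - 1}`, and the constant `∏_{S'} (-a_k)` is left in front.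
-/

open MvPolynomial Finset

section Alternating

variable {n : ℕ} (p : Fin (n + 2) → Prop) [DecidablePred p]

theorem prod_filter_not_comp_add_one {M : Type*} [CommMonoid M] (hp : ∀ j, p (j + 1) ↔ ¬p j)
    (f : Fin (n + 2) → M) :
    ∏ j ∈ univ.filter (fun j => ¬p j), f (j + 1) = ∏ j ∈ univ.filter p, f j :=
  prod_equiv (Equiv.addRight 1) (by simp [hp]) (fun _ _ => rfl)

theorem prod_filter_not_comp_sub_one {M : Type*} [CommMonoid M] (hp : ∀ j, p (j + 1) ↔ ¬p j)
    (f : Fin (n + 2) → M) :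
    ∏ j ∈ univ.filter (fun j => ¬p j), f (j - 1) = ∏ j ∈ univ.filter p, f j :=
  prod_equiv (Equiv.subRight 1) (fun j => by simpa using (iff_not_comm.mp (hp (j - 1))).symm)
    (fun _ _ => rfl)

theorem sq_prod_filter_pow_sub_one {A : Type*} [CommRing A] (hp : ∀ j, p (j + 1) ↔ ¬p j)
    (a : Fin (n + 2) → ℕ) (ha : ∀ j, 2 ≤ a j) (y : Fin (n + 2) → A)
    (hy : ∀ k, y (k + 1) ^ a (k + 1) + a k * y (k - 1) * y k ^ (a k - 1) = 0) :
    (∏ j ∈ univ.filter p, y j ^ (a j - 1)) ^ 2 =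
      (∏ j ∈ univ.filter (fun j => ¬p j), -(a j : A)) * ∏ j, y j ^ (a j - 1) := by
  have hexp : ∀ j, (y j ^ (a j - 1)) ^ 2 = y j ^ a j * y j ^ (a j - 2) ∧
      y j * y j ^ (a j - 2) = y j ^ (a j - 1) := by
    intro j
    obtain ⟨b, hb⟩ : ∃ b, a j = b + 2 := ⟨a j - 2, by have := ha j; omega⟩
    simp only [hb, Nat.add_sub_cancel, show b + 2 - 1 = b + 1 by omega]
    constructor <;> ring
  have hpow : ∏ j ∈ univ.filter p, y j ^ a j =
      (∏ j ∈ univ.filter (fun j => ¬p j), -(a j : A)) * (∏ j ∈ univ.filter p, y j) *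
        ∏ j ∈ univ.filter (fun j => ¬p j), y j ^ (a j - 1) := by
    rw [← prod_filter_not_comp_add_one p hp, ← prod_filter_not_comp_sub_one p hp y,
      ← prod_mul_distrib, ← prod_mul_distrib]
    exact prod_congr rfl fun k _ => by linear_combination hy k
  calc (∏ j ∈ univ.filter p, y j ^ (a j - 1)) ^ 2
      = (∏ j ∈ univ.filter p, y j ^ a j) * ∏ j ∈ univ.filter p, y j ^ (a j - 2) := by
        simp only [← prod_pow, ← prod_mul_distrib, fun j => (hexp j).1]
    _ = (∏ j ∈ univ.filter (fun j => ¬p j), -(a j : A)) *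
          ((∏ j ∈ univ.filter p, y j ^ (a j - 1)) *
            ∏ j ∈ univ.filter (fun j => ¬p j), y j ^ (a j - 1)) := by
        simp only [hpow, ← fun j => (hexp j).2, prod_mul_distrib]
        ring
    _ = _ := by rw [prod_filter_mul_prod_filter_not]

end Alternating

noncomputable def jacobianIdeal {σ R : Type*} [CommRing R] (f : MvPolynomial σ R) :
    Ideal (MvPolynomial σ R) :=
  Ideal.span (Set.range fun i => pderiv i f)

theorem mk_pderiv_jacobianIdeal {σ R : Type*} [CommRing R] (f : MvPolynomial σ R) (i : σ) :
    Ideal.Quotient.mk (jacobianIdeal f) (pderiv i f) = 0 :=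
  Ideal.Quotient.eq_zero_iff_mem.mpr (Ideal.subset_span ⟨i, rfl⟩)

section DualLoop

variable (R : Type*) [CommSemiring R] {n : ℕ}

noncomputable def dualLoop (a : Fin (n + 2) → ℕ) : MvPolynomial (Fin (n + 2)) R :=
  ∑ i, X (i - 1) * X i ^ a i

theorem pderiv_dualLoop (a : Fin (n + 2) → ℕ) (k : Fin (n + 2)) :
    pderiv k (dualLoop R a) =
      X (k + 1) ^ a (k + 1) +
        (a k : MvPolynomial (Fin (n + 2)) R) * X (k - 1) * X k ^ (a k - 1) := by
  simp only [dualLoop, map_sum, Derivation.leibniz, Derivation.leibniz_pow, pderiv_X,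
    Pi.single_apply, smul_eq_mul, mul_ite, mul_one, mul_zero, smul_ite, nsmul_eq_mul,
    sub_eq_iff_eq_add, sum_add_distrib, sum_ite_eq', mem_univ, ↓reduceIte]
  ring

end DualLoop

theorem Fin.val_add_one_mod_two {n : ℕ} (hn : Even (n + 2)) (j : Fin (n + 2)) :
    ((j + 1 : Fin (n + 2)) : ℕ) % 2 = ((j : ℕ) + 1) % 2 := by
  rw [Fin.val_add, Fin.val_one, Nat.mod_mod_of_dvd _ hn.two_dvd]

/-- Indices are `0`-based via `Fin n`; the `1`-based parity of `j : Fin n` is the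
parity of `(j : ℕ) + 1`. -/
theorem dual_loop_broad_squares {n : ℕ} (hn : 2 ≤ n) (hev : Even n)
    (a : ℕ → ℕ) (ha : ∀ i < n, 2 ≤ a i)
    (w : MvPolynomial (Fin n) ℂ)
    (hw : w = ∑ i : Fin n,
      if (i : ℕ) = 0 then
        X (⟨n - 1, Nat.sub_lt (by omega) one_pos⟩ : Fin n) * X i ^ a (i : ℕ)
      else X (⟨(i : ℕ) - 1, Nat.lt_of_le_of_lt (Nat.sub_le _ _) i.isLt⟩ : Fin n) *
        X i ^ a (i : ℕ))
    (J : Ideal (MvPolynomial (Fin n) ℂ))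
    (hJ : J = Ideal.span (Set.range fun i => MvPolynomial.pderiv i w)) :
    Ideal.Quotient.mk J (∏ j ∈ Finset.univ.filter
          (fun j : Fin n => ((j : ℕ) + 1) % 2 = 0), X j ^ (a (j : ℕ) - 1)) ^ 2 =
      (∏ j ∈ Finset.univ.filter (fun j : Fin n => ((j : ℕ) + 1) % 2 = 1),
          (-(a (j : ℕ) : ℂ))) •
        Ideal.Quotient.mk J (∏ j : Fin n, X j ^ (a (j : ℕ) - 1)) ∧
    Ideal.Quotient.mk J (∏ j ∈ Finset.univ.filter
          (fun j : Fin n => ((j : ℕ) + 1) % 2 = 1), X j ^ (a (j : ℕ) - 1)) ^ 2 =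
      (∏ j ∈ Finset.univ.filter (fun j : Fin n => ((j : ℕ) + 1) % 2 = 0),
          (-(a (j : ℕ) : ℂ))) •
        Ideal.Quotient.mk J (∏ j : Fin n, X j ^ (a (j : ℕ) - 1)) := by
  obtain ⟨m, rfl⟩ : ∃ m, n = m + 2 := ⟨n - 2, by omega⟩
  set f := dualLoop ℂ fun i : Fin (m + 2) => a i
  have hwf : w = f := by
    refine hw.trans (sum_congr rfl fun i _ => ?_)
    split_ifs with h <;> congr 2 <;> ext <;> simp [Fin.coe_sub_one, Fin.ext_iff, h]
  obtain rfl : J = jacobianIdeal f := hwf ▸ hJ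
  have hsq : ∀ b < 2, Ideal.Quotient.mk (jacobianIdeal f) (∏ j ∈ univ.filter
        (fun j : Fin (m + 2) => ((j : ℕ) + 1) % 2 = b), X j ^ (a j - 1)) ^ 2 =
      (∏ j ∈ univ.filter (fun j : Fin (m + 2) => ((j : ℕ) + 1) % 2 = 1 - b), -(a j : ℂ)) •
        Ideal.Quotient.mk (jacobianIdeal f) (∏ j : Fin (m + 2), X j ^ (a j - 1)) := by
    intro b hb
    have hcompl : univ.filter (fun j : Fin (m + 2) => ((j : ℕ) + 1) % 2 = 1 - b) =
        univ.filter (fun j : Fin (m + 2) => ¬((j : ℕ) + 1) % 2 = b) :=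
      filter_congr fun j _ => by omega
    rw [hcompl, Algebra.smul_def (A := _ ⧸ jacobianIdeal f)]
    simp only [map_prod, map_pow, map_neg, map_natCast]
    refine sq_prod_filter_pow_sub_one _ (fun j => ?_) _ (fun j => ha j j.isLt) _
      fun k => by simpa [f, pderiv_dualLoop] using mk_pderiv_jacobianIdeal f k
    have := Fin.val_add_one_mod_two hev j
    omega
  exact ⟨hsq 0 two_pos, hsq 1 one_lt_two⟩
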